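/- Let K ⊆ R^n be a compact convex set. Then there exist finitely many Chvátal–Gomory cuts of K whose intersection is contained in a rational affine subspace V with V ⊆ aff(K). -/

import Mathlib

open scoped InnerProductSpace

noncomputable section

abbrev E (n : ℕ) := EuclideanSpace ℝ (Fin n)

/-- The real vector corresponding to an integer vector. -/
def iv {n : ℕ} (c : Fin n → ℤ) : E n := WithLp.toLp 2 (fun i => (c i : ℝ))

/-- The Chvátal–Gomory closure of a set `K ⊆ ℝⁿ`. -/
def cg {n : ℕ} (K : Set (E n)) : Set (E n) :=
  {x | ∀ (c : Fin n → ℤ) (δ : ℝ), (∀ y ∈ K, ⟪iv c, y⟫_ℝ ≤ δ) → ⟪iv c, x⟫_ℝ ≤ (⌊δ⌋ : ℝ)}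

/- ### Auxiliary machinery -/

theorem inner_iv {n : ℕ} (c : Fin n → ℤ) (x : E n) : ⟪iv c, x⟫_ℝ = ∑ i, (c i : ℝ) * x i := by
  simp [iv, PiLp.inner_apply, RCLike.inner_apply, mul_comm]

theorem iv_neg {n : ℕ} (c : Fin n → ℤ) : iv (-c) = - iv c := by
  ext i; simp [iv]

theorem coord_le_norm {n : ℕ} (z : E n) (i : Fin n) : |z i| ≤ ‖z‖ := by
  rw [EuclideanSpace.norm_eq, ← Real.sqrt_sq_eq_abs]
  apply Real.sqrt_le_sqrt
  have := Finset.single_le_sum (f := fun j => ‖z j‖^2) (fun j _ => by positivity) (Finset.mem_univ i)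
  simpa [sq_abs] using this

theorem dirichlet {n : ℕ} (c : Fin n → ℝ) (η : ℝ) (hη : 0 < η) :
    ∃ (q : ℕ) (p : Fin n → ℤ), 1 ≤ q ∧ ∀ i, |(q : ℝ) * c i - p i| ≤ η := by
  obtain ⟨N, hN1, hNinv⟩ : ∃ N : ℕ, 1 ≤ N ∧ η⁻¹ ≤ N :=
    ⟨⌈η⁻¹⌉₊ + 1, by omega, by push_cast; linarith [Nat.le_ceil η⁻¹]⟩
  have hNpos : (0:ℝ) < N := by exact_mod_cast hN1
  have hinv : (1:ℝ)/N ≤ η := by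
    rw [div_le_iff₀ hNpos]
    rw [inv_le_iff_one_le_mul₀ hη] at hNinv; linarith
  have hbd : ∀ (k : Fin (N^n+1)) (i : Fin n),
      (⌊(N:ℝ) * Int.fract ((k:ℕ) * c i)⌋).toNat < N := by
    intro k i
    have h1 : (N:ℝ) * Int.fract ((k:ℕ) * c i) < N := by
      nlinarith [Int.fract_lt_one ((k:ℕ) * c i)]
    have h2 : ⌊(N:ℝ) * Int.fract ((k:ℕ) * c i)⌋ < (N:ℤ) :=
      Int.floor_lt.2 (by exact_mod_cast h1)
    omega
  set f : Fin (N^n + 1) → (Fin n → Fin N) := fun k i =>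
    ⟨(⌊(N:ℝ) * Int.fract ((k:ℕ) * c i)⌋).toNat, hbd k i⟩ with hf
  have key : ∀ k1 k2 : Fin (N^n + 1), (k1:ℕ) < (k2:ℕ) → f k1 = f k2 →
      ∃ (q : ℕ) (p : Fin n → ℤ), 1 ≤ q ∧ ∀ i, |(q : ℝ) * c i - p i| ≤ η := by
    intro k1 k2 hlt heq
    refine ⟨(k2:ℕ) - (k1:ℕ), fun i => ⌊((k2:ℕ):ℝ) * c i⌋ - ⌊((k1:ℕ):ℝ) * c i⌋, by omega, ?_⟩
    intro i
    have h2 : (⌊(N:ℝ) * Int.fract ((k1:ℕ) * c i)⌋).toNat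
        = (⌊(N:ℝ) * Int.fract ((k2:ℕ) * c i)⌋).toNat := by
      simpa [hf] using congrArg Fin.val (congrFun heq i)
    have hnn : ∀ (k : Fin (N^n+1)), (0:ℤ) ≤ ⌊(N:ℝ) * Int.fract ((k:ℕ) * c i)⌋ := by
      intro k
      exact Int.floor_nonneg.2 (mul_nonneg hNpos.le (Int.fract_nonneg _))
    have hfl : ⌊(N:ℝ) * Int.fract ((k1:ℕ) * c i)⌋ = ⌊(N:ℝ) * Int.fract ((k2:ℕ) * c i)⌋ := by
      have := hnn k1; have := hnn k2; omega
    set a := Int.fract ((k1:ℕ) * c i)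
    set b := Int.fract ((k2:ℕ) * c i)
    have hab : |(N:ℝ) * a - (N:ℝ) * b| < 1 := by
      have h1 := Int.floor_le ((N:ℝ) * a)
      have h2 := Int.lt_floor_add_one ((N:ℝ) * a)
      have h3 := Int.floor_le ((N:ℝ) * b)
      have h4 := Int.lt_floor_add_one ((N:ℝ) * b)
      rw [hfl] at h1 h2
      rw [abs_lt]; constructor <;> linarith
    have hab2 : |a - b| < 1/N := by
      rw [abs_lt] at hab ⊢
      constructor <;> nlinarith [hab.1, hab.2, one_div_mul_cancel hNpos.ne']
    have hcast : (((k2:ℕ) - (k1:ℕ) : ℕ) : ℝ) = ((k2:ℕ):ℝ) - ((k1:ℕ):ℝ) := by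
      push_cast [Nat.cast_sub hlt.le]; ring
    have hgoal : ((((k2:ℕ) - (k1:ℕ) : ℕ)) : ℝ) * c i
        - ((⌊((k2:ℕ):ℝ) * c i⌋ - ⌊((k1:ℕ):ℝ) * c i⌋ : ℤ) : ℝ) = b - a := by
      simp only [hcast, Int.cast_sub]
      have e1 : a = ((k1:ℕ):ℝ) * c i - ⌊((k1:ℕ):ℝ) * c i⌋ := rfl
      have e2 : b = ((k2:ℕ):ℝ) * c i - ⌊((k2:ℕ):ℝ) * c i⌋ := rfl
      rw [e1, e2]; ring
    rw [hgoal]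
    have h5 : |b - a| < 1/N := by rw [abs_sub_comm]; exact hab2
    calc |b - a| ≤ 1/N := h5.le
      _ ≤ η := hinv
  obtain ⟨k1, k2, hne, heq⟩ := Fintype.exists_ne_map_eq_of_card_lt f (by simp)
  rcases Fin.lt_or_lt_of_ne hne with h | h
  · exact key k1 k2 h heq
  · exact key k2 k1 h heq.symm

/-- The goal of the main theorem, as a standalone predicate. -/
abbrev Gconc {n : ℕ} (K : Set (E n)) : Prop :=
  ∃ (m : ℕ) (c : Fin m → Fin n → ℤ) (δ : Fin m → ℝ),
      (∀ i, ∀ x ∈ K, ⟪iv (c i), x⟫_ℝ ≤ δ i) ∧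
      ∃ V : Set (E n),
        (∃ (k : ℕ) (a : Fin k → Fin n → ℚ) (b : Fin k → ℚ),
          V = {x | ∀ i, (∑ j, (a i j : ℝ) * x j) = (b i : ℝ)}) ∧
        V ⊆ (affineSpan ℝ K : Set (E n)) ∧
        {x | ∀ i, ⟪iv (c i), x⟫_ℝ ≤ (⌊δ i⌋ : ℝ)} ⊆ V

/-- Solution set of an integer linear system. -/
abbrev Ssol {n m' : ℕ} (dd : Fin m' → Fin n → ℤ) (bb : Fin m' → ℤ) : Set (E n) :=
  {x | ∀ j, ⟪iv (dd j), x⟫_ℝ = ((bb j : ℤ) : ℝ)}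

/-- Direction space of the system. -/
abbrev Dsub {n m' : ℕ} (dd : Fin m' → Fin n → ℤ) : Submodule ℝ (E n) :=
  ⨅ j, LinearMap.ker ((innerSL ℝ (iv (dd j))) : E n →ₗ[ℝ] ℝ)

/-- The invariant: every equation of the system is enforced by a pair of valid CG cuts. -/
def Hv {n : ℕ} (K : Set (E n)) {m' : ℕ} (dd : Fin m' → Fin n → ℤ) (bb : Fin m' → ℤ)
    (δp δm : Fin m' → ℝ) : Prop :=
  ∀ j, (∀ x ∈ K, ⟪iv (dd j), x⟫_ℝ ≤ δp j) ∧ (∀ x ∈ K, -⟪iv (dd j), x⟫_ℝ ≤ δm j) ∧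
    ⌊δp j⌋ = bb j ∧ ⌊δm j⌋ ≤ -bb j

/-- If the solution set of the current system is inside the affine span, we can conclude. -/
theorem finishLem {n : ℕ} (K : Set (E n)) {m' : ℕ} (dd : Fin m' → Fin n → ℤ)
    (bb : Fin m' → ℤ) (δp δm : Fin m' → ℝ) (hv : Hv K dd bb δp δm)
    (hSW : Ssol dd bb ⊆ (affineSpan ℝ K : Set (E n))) : Gconc K := by
  refine ⟨m' + m', Fin.append dd (fun j => -(dd j)), Fin.append δp δm, ?_, Ssol dd bb, ?_, hSW, ?_⟩
  · intro i
    refine Fin.addCases (fun j => ?_) (fun j => ?_) i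
    · simpa only [Fin.append_left] using (hv j).1
    · intro x hx
      simp only [Fin.append_right, iv_neg, inner_neg_left]
      exact (hv j).2.1 x hx
  · refine ⟨m', fun j i => ((dd j i : ℤ) : ℚ), fun j => ((bb j : ℤ) : ℚ), ?_⟩
    ext x
    simp only [Ssol, Set.mem_setOf_eq, inner_iv]
    push_cast
    rfl
  · intro x hx j
    have h1 := hx (Fin.castAdd m' j)
    have h2 := hx (Fin.natAdd m' j)
    simp only [Fin.append_left, Fin.append_right] at h1 h2
    rw [iv_neg, inner_neg_left] at h2
    have e1 : (⌊δp j⌋ : ℝ) = ((bb j : ℤ) : ℝ) := by rw [(hv j).2.2.1]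
    have e2 : ((⌊δm j⌋ : ℤ) : ℝ) ≤ ((-bb j : ℤ) : ℝ) := by exact_mod_cast (hv j).2.2.2
    rw [e1] at h1
    push_cast at e2 h2 ⊢
    linarith

theorem Dsub_mem {n m' : ℕ} (dd : Fin m' → Fin n → ℤ) (v : E n) :
    v ∈ Dsub dd ↔ ∀ j, ⟪iv (dd j), v⟫_ℝ = 0 := by
  simp [Dsub, Submodule.mem_iInf, LinearMap.mem_ker]

set_option maxHeartbeats 1000000 in
theorem mainAux {n : ℕ} (K : Set (E n)) (x0 : E n) (hx0 : x0 ∈ K) (R : ℝ) (hR0 : 0 ≤ R)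
    (hR : ∀ x ∈ K, ‖x - x0‖ ≤ R) :
    ∀ N : ℕ, ∀ (m' : ℕ) (dd : Fin m' → Fin n → ℤ) (bb : Fin m' → ℤ) (δp δm : Fin m' → ℝ),
      Hv K dd bb δp δm → Module.finrank ℝ (Dsub dd) ≤ N → Gconc K := by
  intro N
  induction N using Nat.strong_induction_on with
  | _ N ih =>
  intro m' dd bb δp δm hv hfr
  by_cases hSW : Ssol dd bb ⊆ (affineSpan ℝ K : Set (E n))
  · exact finishLem K dd bb δp δm hv hSW
  obtain ⟨y, hyS, hyW⟩ := Set.not_subset.1 hSW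
  set W := affineSpan ℝ K with hWdef
  set L := W.direction with hLdef
  -- y - x0 is not in the direction space
  have hyx : y - x0 ∉ L := by
    intro h
    apply hyW
    have := AffineSubspace.vadd_mem_of_mem_direction h (mem_affineSpan ℝ hx0)
    simpa using this
  -- find c in L^⊥ with ⟪c, y - x0⟫ ≠ 0
  have hyx2 : y - x0 ∉ Lᗮᗮ := by rwa [Submodule.orthogonal_orthogonal]
  obtain ⟨c, hcL, hg⟩ : ∃ c ∈ Lᗮ, ⟪c, y - x0⟫_ℝ ≠ 0 := by
    by_contra hcon
    push_neg at hcon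
    exact hyx2 (Submodule.mem_orthogonal _ _ |>.2 hcon)
  set g := ⟪c, y - x0⟫_ℝ with hgdef
  have hgpos : 0 < |g| := abs_pos.2 hg
  set Y := ‖y - x0‖ with hYdef
  have hY0 : 0 ≤ Y := norm_nonneg _
  set A := (n : ℝ) * (R + Y) with hAdef
  have hA0 : 0 ≤ A := by positivity
  set m0 := min (4⁻¹ : ℝ) (|g|/2) with hm0def
  have hm0pos : 0 < m0 := lt_min (by norm_num) (by linarith)
  have hm0g : m0 ≤ |g| / 2 := min_le_right _ _
  set η := m0 / (A + 1) with hηdef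
  have hηpos : 0 < η := div_pos hm0pos (by linarith)
  -- the crucial smallness estimate
  have hsmall : (n : ℝ) * η * (R + Y) ≤ m0 := by
    have hA1 : (0:ℝ) < A + 1 := by linarith
    have hηA : η * (A + 1) = m0 := div_mul_cancel₀ _ hA1.ne'
    calc (n:ℝ) * η * (R + Y) = η * A := by rw [hAdef]; ring
      _ ≤ η * (A + 1) := by nlinarith
      _ = m0 := hηA
  obtain ⟨q, p, hq1, hp⟩ := dirichlet (fun i => c i) η hηpos
  set r : E n := iv p - (q : ℝ) • c with hrdef
  have hri : ∀ i, |r i| ≤ η := by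
    intro i
    have : r i = (p i : ℝ) - (q : ℝ) * c i := by
      simp [hrdef, iv]
    rw [this, abs_sub_comm]
    exact hp i
  have hrz : ∀ z : E n, |⟪r, z⟫_ℝ| ≤ (n : ℝ) * η * ‖z‖ := by
    intro z
    rw [PiLp.inner_apply]
    simp only [RCLike.inner_apply, starRingEnd_apply, star_trivial]
    rw [show (∑ i, z i * r i) = ∑ i, r i * z i from Finset.sum_congr rfl (fun i _ => mul_comm _ _)]
    calc |∑ i, r i * z i| ≤ ∑ i, |r i * z i| := Finset.abs_sum_le_sum_abs _ _
      _ ≤ ∑ _i : Fin n, η * ‖z‖ := by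
          apply Finset.sum_le_sum
          intro i _
          rw [abs_mul]
          exact mul_le_mul (hri i) (coord_le_norm z i) (abs_nonneg _) hηpos.le
      _ = (n : ℝ) * η * ‖z‖ := by
          rw [Finset.sum_const, Finset.card_univ, Fintype.card_fin, nsmul_eq_mul]; ring
  have hiv_p : ∀ z : E n, ⟪iv p, z⟫_ℝ = (q : ℝ) * ⟪c, z⟫_ℝ + ⟪r, z⟫_ℝ := by
    intro z
    have : iv p = (q : ℝ) • c + r := by rw [hrdef]; abel
    rw [this, inner_add_left, real_inner_smul_left]
  set μ := ⟪iv p, x0⟫_ℝ with hμdef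
  set ε := (n : ℝ) * η * R with hεdef
  have hε0 : 0 ≤ ε := by positivity
  have hεm0 : ε ≤ m0 := by
    refine le_trans ?_ hsmall
    rw [hεdef]
    nlinarith [mul_nonneg (mul_nonneg ((Nat.cast_nonneg n : (0:ℝ) ≤ n)) hηpos.le) hY0]
  have hε14 : ε ≤ 4⁻¹ := le_trans hεm0 (min_le_left _ _)
  -- orthogonality on K
  have hcK : ∀ x ∈ K, ⟪c, x - x0⟫_ℝ = 0 := by
    intro x hx
    have hmem : x - x0 ∈ L := by
      have := AffineSubspace.vsub_mem_direction (mem_affineSpan ℝ hx) (mem_affineSpan ℝ hx0)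
      simpa using this
    rw [real_inner_comm]
    exact (Submodule.mem_orthogonal _ _ |>.1 hcL) _ hmem
  -- validity of the two new cuts
  have hkey : ∀ x ∈ K, ⟪iv p, x⟫_ℝ - μ = ⟪r, x - x0⟫_ℝ := by
    intro x hx
    rw [hμdef, ← inner_sub_right, hiv_p, hcK x hx]; ring
  have hbound : ∀ x ∈ K, |⟪r, x - x0⟫_ℝ| ≤ ε := by
    intro x hx
    refine le_trans (hrz (x - x0)) ?_
    rw [hεdef]
    nlinarith [mul_nonneg ((Nat.cast_nonneg n : (0:ℝ) ≤ n)) hηpos.le, hR x hx,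
      norm_nonneg (x - x0)]
  have hvp : ∀ x ∈ K, ⟪iv p, x⟫_ℝ ≤ μ + ε := by
    intro x hx
    have h3 := abs_le.1 (hbound x hx)
    have := hkey x hx
    linarith [h3.1, h3.2]
  have hvm : ∀ x ∈ K, -⟪iv p, x⟫_ℝ ≤ ε - μ := by
    intro x hx
    have h3 := abs_le.1 (hbound x hx)
    have := hkey x hx
    linarith [h3.1, h3.2]
  -- floor arithmetic
  have hfsum : ⌊μ + ε⌋ + ⌊ε - μ⌋ ≤ 0 := by
    have h1 := Int.floor_le (μ + ε)
    have h2 := Int.floor_le (ε - μ)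
    have : ((⌊μ + ε⌋ + ⌊ε - μ⌋ : ℤ) : ℝ) < 1 := by push_cast; linarith
    exact_mod_cast Int.lt_add_one_iff.1 (by exact_mod_cast this)
  clear_value g Y A m0 η r μ ε
  by_cases hb0 : ⌊μ + ε⌋ + ⌊ε - μ⌋ = 0
  case neg =>
    -- the two cuts alone are infeasible: conclude with V = ∅
    refine ⟨2, ![p, -p], ![μ + ε, ε - μ], ?_, ?_⟩
    · intro i
      fin_cases i
      · intro x hx
        show ⟪iv p, x⟫_ℝ ≤ μ + ε
        exact hvp x hx
      · intro x hx
        show ⟪iv (-p), x⟫_ℝ ≤ ε - μ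
        rw [iv_neg, inner_neg_left]
        exact hvm x hx
    · refine ⟨{x | ∀ _i : Fin 1, (∑ j, ((0:ℚ):ℝ) * x j) = ((1:ℚ):ℝ)}, ⟨1, fun _ _ => 0, fun _ => 1, rfl⟩, ?_, ?_⟩
      · intro x hx
        exfalso
        have := hx 0
        simp at this
      · intro x hx
        exfalso
        have h0 := hx 0
        have h1 := hx 1
        simp only [Matrix.cons_val_zero, Matrix.cons_val_one, Matrix.head_cons] at h0 h1
        rw [iv_neg, inner_neg_left] at h1
        have hle : ⌊μ + ε⌋ + ⌊ε - μ⌋ ≤ -1 := by omega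
        have hler : ((⌊μ + ε⌋ : ℝ) + (⌊ε - μ⌋ : ℝ)) ≤ -1 := by exact_mod_cast hle
        linarith
  case pos =>
    obtain ⟨b, hbdef⟩ : ∃ b : ℤ, b = ⌊μ + ε⌋ := ⟨_, rfl⟩
    have hbμ_up : (b:ℝ) ≤ μ + ε := by rw [hbdef]; exact Int.floor_le _
    have hbneg : b = -⌊ε - μ⌋ := by omega
    have hbμ_lo : μ - ε ≤ (b:ℝ) := by
      have h := Int.floor_le (ε - μ)
      have h2 : ((b:ℤ):ℝ) = -((⌊ε - μ⌋:ℤ):ℝ) := by rw [hbneg]; push_cast; ring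
      linarith [h, h2]
    -- the new equation is violated at y
    have h1 : ⟪iv p, y⟫_ℝ - μ = (q:ℝ) * g + ⟪r, y - x0⟫_ℝ := by
      rw [hμdef, ← inner_sub_right, hiv_p, ← hgdef]
    have hrY : |⟪r, y - x0⟫_ℝ| ≤ (n:ℝ) * η * Y := by
      have := hrz (y - x0)
      rwa [← hYdef] at this
    have hsum2 : (n:ℝ) * η * Y + ε ≤ m0 := by
      refine le_trans ?_ hsmall
      rw [hεdef]; ring_nf; rfl
    have hq1r : (1:ℝ) ≤ (q:ℝ) := by exact_mod_cast hq1
    have hviol : ⟪iv p, y⟫_ℝ ≠ (b:ℝ) := by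
      intro hE
      have h2 : (q:ℝ) * g = -(⟪r, y - x0⟫_ℝ + (μ - (b:ℝ))) := by
        rw [hE] at h1; linarith
      have h3 : |(q:ℝ) * g| ≤ |⟪r, y - x0⟫_ℝ| + |μ - (b:ℝ)| := by
        rw [h2, abs_neg]
        exact abs_add_le _ _
      have h4 : |μ - (b:ℝ)| ≤ ε := by rw [abs_le]; constructor <;> linarith
      have h5 : |g| ≤ |(q:ℝ) * g| := by
        rw [abs_mul, abs_of_nonneg (by linarith : (0:ℝ) ≤ (q:ℝ))]
        nlinarith
      have hrY2 := abs_nonneg (⟪r, y - x0⟫_ℝ)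
      linarith
    -- extend the system by the new equation
    set dd' : Fin (m' + 1) → Fin n → ℤ := Fin.snoc dd p with hdd'
    set bb' : Fin (m' + 1) → ℤ := Fin.snoc bb b with hbb'
    set δp' : Fin (m' + 1) → ℝ := Fin.snoc δp (μ + ε) with hδp'
    set δm' : Fin (m' + 1) → ℝ := Fin.snoc δm (ε - μ) with hδm'
    have hv' : Hv K dd' bb' δp' δm' := by
      intro j
      refine Fin.lastCases ?_ (fun j => ?_) j
      · simp only [hdd', hbb', hδp', hδm', Fin.snoc_last]
        exact ⟨hvp, hvm, hbdef.symm, by omega⟩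

      · simp only [hdd', hbb', hδp', hδm', Fin.snoc_castSucc]
        exact hv j
    by_cases hD : ∀ v ∈ Dsub dd, ⟪iv p, v⟫_ℝ = 0
    · -- the new system has empty solution set
      have hS'W : Ssol dd' bb' ⊆ (affineSpan ℝ K : Set (E n)) := by
        intro x hx
        exfalso
        have hxj : ∀ j, ⟪iv (dd j), x⟫_ℝ = ((bb j : ℤ) : ℝ) := by
          intro j
          have := hx (Fin.castSucc j)
          simpa [hdd', hbb', Fin.snoc_castSucc] using this
        have hxb : ⟪iv p, x⟫_ℝ = ((b : ℤ) : ℝ) := by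
          have := hx (Fin.last m')
          simpa [hdd', hbb', Fin.snoc_last] using this
        have hxy : x - y ∈ Dsub dd := by
          rw [Dsub_mem]
          intro j
          rw [inner_sub_right, hxj j, hyS j]; ring
        have := hD _ hxy
        rw [inner_sub_right, hxb] at this
        exact hviol (by linarith)
      exact finishLem K dd' bb' δp' δm' hv' hS'W
    · -- strict rank decrease: recurse
      push_neg at hD
      obtain ⟨v, hvD, hvne⟩ := hD
      have hle : Dsub dd' ≤ Dsub dd := by
        intro w hw
        rw [Dsub_mem] at hw ⊢
        intro j
        have := hw (Fin.castSucc j)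
        simpa [hdd', Fin.snoc_castSucc] using this
      have hne' : Dsub dd' ≠ Dsub dd := by
        intro hEq
        apply hvne
        have hv' : v ∈ Dsub dd' := hEq ▸ hvD
        have := (Dsub_mem _ _).1 hv' (Fin.last m')
        simpa [hdd', Fin.snoc_last] using this
      have hlt : Dsub dd' < Dsub dd := lt_of_le_of_ne hle hne'
      have hfr' : Module.finrank ℝ (Dsub dd') < N :=
        lt_of_lt_of_le (Submodule.finrank_lt_finrank_of_lt hlt) hfr
      exact ih _ hfr' (m' + 1) dd' bb' δp' δm' hv' le_rfl

/-- **Restriction to a rational affine subspace.** For a compact convex set `K`, finitely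
many CG cuts of `K` define a set contained in a rational affine subspace `V ⊆ aff K`. -/
theorem stmt9 {n : ℕ} (K : Set (E n)) (hKcpt : IsCompact K) (hKconv : Convex ℝ K) :
    ∃ (m : ℕ) (c : Fin m → Fin n → ℤ) (δ : Fin m → ℝ),
      (∀ i, ∀ x ∈ K, ⟪iv (c i), x⟫_ℝ ≤ δ i) ∧
      ∃ V : Set (E n),
        (∃ (k : ℕ) (a : Fin k → Fin n → ℚ) (b : Fin k → ℚ),
          V = {x | ∀ i, (∑ j, (a i j : ℝ) * x j) = (b i : ℝ)}) ∧
        V ⊆ (affineSpan ℝ K : Set (E n)) ∧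
        {x | ∀ i, ⟪iv (c i), x⟫_ℝ ≤ (⌊δ i⌋ : ℝ)} ⊆ V := by
  by_cases hK : K = ∅
  · refine ⟨1, fun _ => 0, fun _ => -1, ?_,
      {x | ∀ _i : Fin 1, (∑ j, ((0:ℚ):ℝ) * x j) = ((1:ℚ):ℝ)},
      ⟨1, fun _ _ => 0, fun _ => 1, rfl⟩, ?_, ?_⟩
    · intro i x hx
      exact absurd hx (by simp [hK])
    · intro x hx
      exfalso
      simpa using hx 0
    · intro x hx
      exfalso
      have h := hx 0
      rw [inner_iv] at h
      norm_num at h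
  · obtain ⟨x0, hx0⟩ := Set.nonempty_iff_ne_empty.2 hK
    obtain ⟨R0, hR0⟩ := hKcpt.isBounded.subset_closedBall x0
    have hR : ∀ x ∈ K, ‖x - x0‖ ≤ max R0 0 := by
      intro x hx
      have := hR0 hx
      rw [Metric.mem_closedBall] at this
      rw [← dist_eq_norm]
      exact le_trans this (le_max_left _ _)
    exact mainAux K x0 hx0 (max R0 0) (le_max_right _ _) hR n 0 (fun i => Fin.elim0 i)
      (fun i => Fin.elim0 i) (fun i => Fin.elim0 i) (fun i => Fin.elim0 i)
      (fun j => Fin.elim0 j)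
      (le_trans (Submodule.finrank_le _) (le_of_eq finrank_euclideanSpace_fin))
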